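/- Let n ≥ 2, let Ω ⊂ ℝⁿ be a bounded open set, and let f : ℝⁿ → ℂ be a bounded measurable function vanishing outside Ω. If ∫_Ω f(x) exp(ρ₁·x) exp(ρ₂·x) dx = 0 for every pair ρ₁, ρ₂ ∈ ℂⁿ satisfying ρ₁·ρ₁ = 0 and ρ₂·ρ₂ = 0, then f = 0 almost everywhere. -/

import Mathlib

/-!
If `η ⊥ ξ` and `‖η‖ = ‖ξ‖`, then `iξ + η` and `iξ - η` are complex null vectors (such an `η`
exists once `n ≥ 2`), and their sum `2iξ` is an arbitrary purely imaginary vector. Hence the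
hypothesis says that the Fourier transform of the integrable function `f` vanishes everywhere,
and by Fourier inversion `f` integrates to zero against every test function, so `f = 0` a.e.
-/

open MeasureTheory FourierTransform Complex
open scoped Real RealInnerProductSpace SchwartzMap

section FourierUniqueness

variable {V F : Type*} [NormedAddCommGroup V] [InnerProductSpace ℝ V] [FiniteDimensional ℝ V]
  [MeasurableSpace V] [BorelSpace V] [NormedAddCommGroup F] [NormedSpace ℂ F] [CompleteSpace F]

theorem MeasureTheory.Integrable.ae_eq_zero_of_fourier_eq_zero {f : V → F} (hf : Integrable f)
    (hFf : 𝓕 f = 0) : f =ᵐ[volume] 0 := by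
  refine ae_eq_zero_of_integral_contDiff_smul_eq_zero hf.locallyIntegrable
    fun g hg_smooth hg_supp ↦ ?_
  have hφ_supp : HasCompactSupport (ofRealCLM ∘ g) := hg_supp.comp_left rfl
  let ψ : 𝓢(V, ℂ) := 𝓕⁻ (hφ_supp.toSchwartzMap (by fun_prop))
  have hψ : 𝓕 (ψ : V → ℂ) = fun x ↦ (g x : ℂ) := by
    rw [← SchwartzMap.fourier_coe, FourierTransform.fourier_fourierInv_eq]; rfl
  calc ∫ x, g x • f x = ∫ x, 𝓕 (ψ : V → ℂ) x • f x := by simp [hψ]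
    _ = ∫ ξ, ψ ξ • 𝓕 f ξ := by
      simpa using! VectorFourier.integral_fourierIntegral_smul_eq_flip (L := innerₗ V)
        Real.continuous_fourierChar continuous_inner ψ.integrable hf
    _ = 0 := by simp [hFf]

end FourierUniqueness

theorem exists_inner_eq_zero_norm_eq {E : Type*} [NormedAddCommGroup E] [InnerProductSpace ℝ E]
    (hE : 1 < Module.finrank ℝ E) (ξ : E) : ∃ η : E, ⟪ξ, η⟫ = 0 ∧ ‖η‖ = ‖ξ‖ := by
  have : FiniteDimensional ℝ E := Module.finite_of_finrank_pos (by omega)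
  obtain ⟨v, hv, hv0⟩ : ∃ v ∈ (ℝ ∙ ξ)ᗮ, v ≠ 0 := by
    refine Submodule.exists_mem_ne_zero_of_ne_bot fun hbot ↦ ?_
    have hsum := Submodule.finrank_add_finrank_orthogonal (ℝ ∙ ξ)
    have hspan : Module.finrank ℝ (ℝ ∙ ξ) ≤ 1 := by simpa using finrank_span_le_card {ξ}
    rw [hbot, finrank_bot] at hsum
    omega
  refine ⟨(‖ξ‖ / ‖v‖) • v, ?_, ?_⟩
  · rw [real_inner_smul_right, Submodule.mem_orthogonal_singleton_iff_inner_right.mp hv, mul_zero]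
  · rw [norm_smul, norm_div, norm_norm, norm_norm, div_mul_cancel₀ _ (norm_ne_zero_iff.2 hv0)]

theorem sum_I_mul_add_sq_eq_zero {ι : Type*} [Fintype ι] {ξ η : EuclideanSpace ℝ ι}
    (hξη : ⟪ξ, η⟫ = 0) (hnorm : ‖η‖ = ‖ξ‖) : ∑ i, (I * ξ i + η i) ^ 2 = 0 := by
  have hinner : ∑ i, ξ i * η i = 0 := by simpa [PiLp.inner_apply, mul_comm] using hξη
  have hsq : ∑ i, η i ^ 2 = ∑ i, ξ i ^ 2 := by
    have := congrArg (· ^ 2) hnorm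
    simpa only [EuclideanSpace.norm_sq_eq, Real.norm_eq_abs, sq_abs] using this
  have hexpand (i : ι) :
      (I * ξ i + η i) ^ 2 = ((η i ^ 2 - ξ i ^ 2 : ℝ) : ℂ) + 2 * I * (ξ i * η i : ℝ) := by
    push_cast
    linear_combination (ξ i : ℂ) ^ 2 * I_sq
  simp only [hexpand, Finset.sum_add_distrib, ← Finset.mul_sum, ← ofReal_sum,
    Finset.sum_sub_distrib, hsq, hinner]
  simp

theorem fourier_eq_integral_mul_exp_mul_exp {ι : Type*} [Fintype ι]
    (f : EuclideanSpace ℝ ι → ℂ) (w : EuclideanSpace ℝ ι) (ρ₁ ρ₂ : ι → ℂ)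
    (hρ : ∀ i, ρ₁ i + ρ₂ i = -2 * π * I * w i) :
    𝓕 f w = ∫ x, f x * exp (∑ i, ρ₁ i * x i) * exp (∑ i, ρ₂ i * x i) := by
  rw [Real.fourier_eq']
  congr 1 with x
  rw [smul_eq_mul, mul_comm, mul_assoc (f x), ← exp_add, ← Finset.sum_add_distrib]
  congr 2
  simp only [← add_mul, hρ, PiLp.inner_apply, RCLike.inner_apply, conj_trivial]
  push_cast
  rw [Finset.mul_sum, Finset.sum_mul]
  exact Finset.sum_congr rfl fun i _ ↦ by ring

theorem stmt4_general {n : ℕ} (hn : 2 ≤ n) (Ω : Set (EuclideanSpace ℝ (Fin n)))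
    (hΩb : Bornology.IsBounded Ω)
    (f : EuclideanSpace ℝ (Fin n) → ℂ)
    (hfm : Measurable f) (hfb : ∃ C, ∀ x, ‖f x‖ ≤ C)
    (hfs : ∀ x ∉ Ω, f x = 0)
    (h : ∀ ρ₁ ρ₂ : Fin n → ℂ, (∑ i, ρ₁ i ^ 2) = 0 → (∑ i, ρ₂ i ^ 2) = 0 →
      ∫ x in Ω, f x * Complex.exp (∑ i, ρ₁ i * (x i : ℂ)) *
        Complex.exp (∑ i, ρ₂ i * (x i : ℂ)) = 0) :
    f =ᵐ[volume] 0 := by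
  obtain ⟨C, hC⟩ := hfb
  have hfi : Integrable f :=
    (Measure.integrableOn_of_bounded hΩb.measure_lt_top.ne hfm.aestronglyMeasurable
      (ae_of_all _ hC)).integrable_of_forall_notMem_eq_zero hfs
  refine hfi.ae_eq_zero_of_fourier_eq_zero (funext fun w ↦ ?_)
  obtain ⟨η, hη, hηξ⟩ := exists_inner_eq_zero_norm_eq (by simp; omega) (-π • w)
  rw [fourier_eq_integral_mul_exp_mul_exp f w (fun i ↦ I * (-π • w) i + η i)
      (fun i ↦ I * (-π • w) i + (-η) i) fun i ↦ by simp; ring,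
    ← setIntegral_eq_integral_of_forall_compl_eq_zero fun x hx ↦ by simp [hfs x hx]]
  exact h _ _ (sum_I_mul_add_sq_eq_zero hη hηξ)
    (sum_I_mul_add_sq_eq_zero (by simpa using hη) (by simpa using hηξ))

theorem stmt4 {n : ℕ} (hn : 2 ≤ n) (Ω : Set (EuclideanSpace ℝ (Fin n)))
    (hΩo : IsOpen Ω) (hΩb : Bornology.IsBounded Ω)
    (f : EuclideanSpace ℝ (Fin n) → ℂ)
    (hfm : Measurable f) (hfb : ∃ C, ∀ x, ‖f x‖ ≤ C)
    (hfs : ∀ x ∉ Ω, f x = 0)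
    (h : ∀ ρ₁ ρ₂ : Fin n → ℂ, (∑ i, ρ₁ i ^ 2) = 0 → (∑ i, ρ₂ i ^ 2) = 0 →
      ∫ x in Ω, f x * Complex.exp (∑ i, ρ₁ i * (x i : ℂ)) *
        Complex.exp (∑ i, ρ₂ i * (x i : ℂ)) = 0) :
    f =ᵐ[volume] 0 :=
  stmt4_general hn Ω hΩb f hfm hfb hfs h
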